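/- arXiv:1102.3093 — 2 statements merged into one kernel-verified Lean document; each statement's English description precedes it below -/
import Mathlib

section
/- Let k ≥ 1 and let L ⊆ Σ* be recognized by a realtime deterministic automaton with k blind counters, given concretely by a finite state set Q, transition function δ : Q × Σ → Q, counter-update function c : Q → ℤᵏ (applied upon entering a state), initial state q₀, and accepting set Q_a ⊆ Q; that is, w = w_1 … w_n belongs to L if and only if, for the run q_i = δ(q_{i−1}, w_i), the final state q_n lies in Q_a and the total counter vector ∑_{i=1}^{n} c(q_i) equals 0 ∈ ℤᵏ. Then there exists a generalized finite automaton G over Σ such that f_G(w) = 0 for every w ∈ L and f_G(w) > 0 for every w ∉ L. (Equivalently, the complement of L belongs to NQAL, the class of languages definable by a GFA whose accepting value is positive exactly on members.) -/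
/-!
Write `s_l(w)` for the value of counter `l` after reading `w`. The function
`w ↦ ∑ l, s_l(w)² + [q_n ∉ Q_a]` vanishes exactly on `L` and is positive off `L`, so it suffices
to realize it by a GFA. Functions realized by GFAs are closed under sums (block-diagonal
matrices) and products (Kronecker products). The indicator of the final state is realized by
the one-hot vector of the current state, and each `s_l` by that vector extended with one
accumulator coordinate.
-/

open Matrix

open scoped Kronecker

section

variable {α : Type}

/-- The fold computes `A_{w_m} ⋯ A_{w_1} v₀`, cf. `prod_reverse_map_mulVec`. -/
def IsGFARealizable (g : List α → ℝ) : Prop :=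
  ∃ (ι : Type) (_ : Fintype ι) (A : α → Matrix ι ι ℝ) (v₀ f : ι → ℝ),
    ∀ w, g w = f ⬝ᵥ w.foldl (fun v a => A a *ᵥ v) v₀

section Vectors

variable {R ι κ : Type} [CommSemiring R] [Fintype ι] [Fintype κ]

theorem kronecker_mulVec_mul (A : Matrix ι ι R) (B : Matrix κ κ R) (x : ι → R) (y : κ → R) :
    (A ⊗ₖ B) *ᵥ (fun p => x p.1 * y p.2) = fun p => (A *ᵥ x) p.1 * (B *ᵥ y) p.2 := by
  ext ⟨i, j⟩
  simp only [mulVec, dotProduct, Fintype.sum_prod_type, kroneckerMap_apply, Finset.sum_mul_sum]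
  exact Finset.sum_congr rfl fun _ _ => Finset.sum_congr rfl fun _ _ => by ring

theorem mul_dotProduct_mul (f x : ι → R) (e y : κ → R) :
    (fun p : ι × κ => f p.1 * e p.2) ⬝ᵥ (fun p => x p.1 * y p.2) = (f ⬝ᵥ x) * (e ⬝ᵥ y) := by
  simp only [dotProduct, Fintype.sum_prod_type, Finset.sum_mul_sum]
  exact Finset.sum_congr rfl fun _ _ => Finset.sum_congr rfl fun _ _ => by ring

end Vectors

namespace IsGFARealizable

theorem of_simulation {S ι : Type} [Fintype ι] (T : S → α → S) (s₀ : S) (φ : S → ι → ℝ)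
    (A : α → Matrix ι ι ℝ) (f : ι → ℝ) (hA : ∀ s a, A a *ᵥ φ s = φ (T s a)) :
    IsGFARealizable fun w => f ⬝ᵥ φ (w.foldl T s₀) :=
  ⟨ι, inferInstance, A, φ s₀, f, fun _ => by rw [List.foldl_hom φ hA]⟩

theorem zero : IsGFARealizable (0 : List α → ℝ) :=
  ⟨Empty, inferInstance, fun _ => 0, 0, 0, fun _ => by simp⟩

theorem add {g h : List α → ℝ} (hg : IsGFARealizable g) (hh : IsGFARealizable h) :
    IsGFARealizable (g + h) := by
  obtain ⟨ι, _, A, v, f, hg⟩ := hg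
  obtain ⟨κ, _, B, u, e, hh⟩ := hh
  refine ⟨ι ⊕ κ, inferInstance, fun a => fromBlocks (A a) 0 0 (B a), Sum.elim v u, Sum.elim f e,
    fun w => ?_⟩
  rw [List.foldl_hom₂ w Sum.elim (fun x a => A a *ᵥ x) (fun y a => B a *ᵥ y) _ v u
      fun x y a => by simp [fromBlocks_mulVec],
    sumElim_dotProduct_sumElim, Pi.add_apply, hg, hh]

theorem mul {g h : List α → ℝ} (hg : IsGFARealizable g) (hh : IsGFARealizable h) :
    IsGFARealizable (g * h) := by
  obtain ⟨ι, _, A, v, f, hg⟩ := hg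
  obtain ⟨κ, _, B, u, e, hh⟩ := hh
  refine ⟨ι × κ, inferInstance, fun a => A a ⊗ₖ B a, fun p => v p.1 * u p.2,
    fun p => f p.1 * e p.2, fun w => ?_⟩
  have hfold := List.foldl_hom₂ w (fun (x : ι → ℝ) (y : κ → ℝ) (p : ι × κ) => x p.1 * y p.2)
    (fun x a => A a *ᵥ x) (fun y a => B a *ᵥ y) (fun z a => (A a ⊗ₖ B a) *ᵥ z) v u
    fun x y a => (kronecker_mulVec_mul _ _ _ _).symm
  beta_reduce at hfold
  rw [hfold, mul_dotProduct_mul, Pi.mul_apply, hg, hh]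

theorem sum {ι : Type} (s : Finset ι) {g : ι → List α → ℝ} (hg : ∀ i ∈ s, IsGFARealizable (g i)) :
    IsGFARealizable (∑ i ∈ s, g i) :=
  Finset.sum_induction g IsGFARealizable (fun _ _ => add) zero hg

end IsGFARealizable

section Automaton

variable {Q : Type}

def transitionMatrix [DecidableEq Q] (δ : Q → α → Q) (a : α) : Matrix Q Q ℝ :=
  of fun q q' => (Pi.single (δ q' a) 1 : Q → ℝ) q

theorem transitionMatrix_mulVec_single [Fintype Q] [DecidableEq Q] (δ : Q → α → Q) (a : α)
    (q : Q) : transitionMatrix δ a *ᵥ Pi.single q 1 = Pi.single (δ q a) 1 := by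
  rw [mulVec_single_one]
  rfl

theorem foldl_accumulate_weight (δ : Q → α → Q) (h : Q → ℝ) (w : List α) (q : Q) (s : ℝ) :
    w.foldl (fun x a => (δ x.1 a, x.2 + h (δ x.1 a))) (q, s) =
      (w.foldl δ q, s + ((List.scanl δ q w).tail.map h).sum) := by
  induction w generalizing q s with
  | nil => simp
  | cons a w ih =>
    rw [List.foldl_cons, ih, List.foldl_cons]
    cases w <;> simp [add_assoc]

variable [Fintype Q]

theorem isGFARealizable_comp_foldl (δ : Q → α → Q) (q₀ : Q) (h : Q → ℝ) :
    IsGFARealizable fun w => h (w.foldl δ q₀) := by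
  classical
  simpa only [dotProduct_single_one] using
    IsGFARealizable.of_simulation δ q₀ (fun q => Pi.single q 1) (transitionMatrix δ) h
      fun q a => transitionMatrix_mulVec_single δ a q

theorem isGFARealizable_sum_scanl_tail (δ : Q → α → Q) (q₀ : Q) (h : Q → ℝ) :
    IsGFARealizable fun w => ((List.scanl δ q₀ w).tail.map h).sum := by
  classical
  have := IsGFARealizable.of_simulation (fun x a => (δ x.1 a, x.2 + h (δ x.1 a))) (q₀, 0)
    (fun x => Sum.elim (fun _ : Unit => x.2) (Pi.single x.1 1))
    (fun a => fromBlocks 1 (of fun _ q => h (δ q a)) 0 (transitionMatrix δ a)) (Sum.elim 1 0)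
    fun x a => by
      simp only [fromBlocks_mulVec, Sum.elim_comp_inl, Sum.elim_comp_inr,
        transitionMatrix_mulVec_single]
      ext (_ | _) <;> simp
  simpa [foldl_accumulate_weight] using this

end Automaton

theorem prod_reverse_map_mulVec {R ι : Type} [Semiring R] [Fintype ι] [DecidableEq ι]
    (A : α → Matrix ι ι R) (w : List α) (v : ι → R) :
    (w.reverse.map A).prod *ᵥ v = w.foldl (fun v a => A a *ᵥ v) v := by
  induction w generalizing v with
  | nil => simp
  | cons a w ih =>
    rw [List.reverse_cons, List.map_append, List.prod_append, ← mulVec_mulVec, List.foldl_cons,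
      ← ih]
    simp

theorem IsGFARealizable.exists_fin {g : List α → ℝ} (hg : IsGFARealizable g) :
    ∃ (n : ℕ) (A : α → Matrix (Fin n) (Fin n) ℝ) (v₀ f : Fin n → ℝ),
      ∀ w, g w = f ⬝ᵥ ((w.reverse.map A).prod *ᵥ v₀) := by
  obtain ⟨ι, _, A, v, f, hg⟩ := hg
  let e := Fintype.equivFin ι
  refine ⟨_, fun a => reindex e e (A a), v ∘ e.symm, f ∘ e.symm, fun w => ?_⟩
  have hstep (x : ι → ℝ) (a : α) : reindex e e (A a) *ᵥ (x ∘ e.symm) = (A a *ᵥ x) ∘ e.symm := by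
    rw [reindex_apply, submatrix_mulVec_equiv, Equiv.symm_symm, Function.comp_assoc,
      Equiv.symm_comp_self, Function.comp_id]
  rw [prod_reverse_map_mulVec, List.foldl_hom (· ∘ e.symm) hstep,
    comp_equiv_dotProduct_comp_equiv, hg]

theorem sum_sq_add_ite_nonneg {ι : Type} [Fintype ι] (x : ι → ℝ) (p : Prop) [Decidable p] :
    0 ≤ ∑ i, x i ^ 2 + if p then 0 else 1 := by
  split_ifs <;> positivity

theorem sum_sq_add_ite_eq_zero_iff {ι : Type} [Fintype ι] (x : ι → ℝ) (p : Prop) [Decidable p] :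
    ∑ i, x i ^ 2 + (if p then 0 else 1) = 0 ↔ p ∧ ∀ i, x i = 0 := by
  rw [add_eq_zero_iff_of_nonneg (by positivity) (by split_ifs <;> norm_num),
    Finset.sum_eq_zero_iff_of_nonneg fun i _ => sq_nonneg (x i)]
  simp only [Finset.mem_univ, true_implies, sq_eq_zero_iff, ite_eq_left_iff, one_ne_zero,
    imp_false, not_not]
  exact and_comm

end

theorem complement_of_rtDkBCA_in_NQAL_general {Q : Type} [Fintype Q] {α : Type}
    {k : ℕ} (δ : Q → α → Q) (c : Q → Fin k → ℤ)
    (q₀ : Q) (Qa : Set Q) :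
    ∃ (n : ℕ) (A : α → Matrix (Fin n) (Fin n) ℝ) (v0 f : Fin n → ℝ),
      ∀ w : List α,
        ((w.foldl δ q₀ ∈ Qa ∧
            ∀ l : Fin k, (((List.scanl δ q₀ w).tail.map fun r => c r l).sum) = 0) →
          f ⬝ᵥ ((w.reverse.map A).prod *ᵥ v0) = 0) ∧
        (¬ (w.foldl δ q₀ ∈ Qa ∧
            ∀ l : Fin k, (((List.scanl δ q₀ w).tail.map fun r => c r l).sum) = 0) →
          f ⬝ᵥ ((w.reverse.map A).prod *ᵥ v0) > 0) := by
  classical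
  let counter (l : Fin k) (w : List α) : ℝ := ((List.scanl δ q₀ w).tail.map fun r => c r l).sum
  have hrealizable : IsGFARealizable fun w =>
      ∑ l, counter l w ^ 2 + if w.foldl δ q₀ ∈ Qa then 0 else 1 := by
    have hcounter (l : Fin k) : IsGFARealizable (counter l) := by
      simpa [counter, List.map_map, Function.comp_def] using
        isGFARealizable_sum_scanl_tail δ q₀ fun r => (c r l : ℝ)
    convert (IsGFARealizable.sum Finset.univ fun l _ => (hcounter l).mul (hcounter l)).add
      (isGFARealizable_comp_foldl δ q₀ fun q => if q ∈ Qa then 0 else 1) using 1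
    ext w
    simp [sq]
  obtain ⟨n, A, v₀, f, hf⟩ := hrealizable.exists_fin
  refine ⟨n, A, v₀, f, fun w => ?_⟩
  have hzero := sum_sq_add_ite_eq_zero_iff (fun l => counter l w) (w.foldl δ q₀ ∈ Qa)
  simp only [counter, Int.cast_eq_zero] at hzero
  rw [← hf w]
  exact ⟨hzero.2, fun h => (sum_sq_add_ite_nonneg _ _).lt_of_ne' (mt hzero.1 h)⟩

/-- **The complement of every rtDkBCA language is in NQAL.**
Let `k ≥ 1` and let `L ⊆ Σ*` be recognized by a realtime deterministic automaton with
`k` blind counters, given by a finite state set `Q`, transition function `δ : Q × Σ → Q`,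
counter-update function `c : Q → ℤᵏ` (applied upon entering a state), initial state `q₀`
and accepting set `Q_a`:  `w = w₁ … w_n ∈ L` iff the final state `q_n` of the run
`q_i = δ q_{i-1} w_i` lies in `Q_a` and the total counter vector `∑ i, c (q_i)` is `0`.
Then there is a generalized finite automaton `G` over `Σ` (accepting value
`f_G(w) = f · A_{w_m} ⋯ A_{w_1} · v0`) with `f_G(w) = 0` for every `w ∈ L` and
`f_G(w) > 0` for every `w ∉ L`. -/
theorem complement_of_rtDkBCA_in_NQAL {Q : Type} [Fintype Q] {α : Type}
    {k : ℕ} (hk : 1 ≤ k) (δ : Q → α → Q) (c : Q → Fin k → ℤ)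
    (q₀ : Q) (Qa : Set Q) :
    ∃ (n : ℕ) (A : α → Matrix (Fin n) (Fin n) ℝ) (v0 f : Fin n → ℝ),
      ∀ w : List α,
        ((w.foldl δ q₀ ∈ Qa ∧
            ∀ l : Fin k, (((List.scanl δ q₀ w).tail.map fun r => c r l).sum) = 0) →
          f ⬝ᵥ ((w.reverse.map A).prod *ᵥ v0) = 0) ∧
        (¬ (w.foldl δ q₀ ∈ Qa ∧
            ∀ l : Fin k, (((List.scanl δ q₀ w).tail.map fun r => c r l).sum) = 0) →
          f ⬝ᵥ ((w.reverse.map A).prod *ᵥ v0) > 0) :=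
  complement_of_rtDkBCA_in_NQAL_general δ c q₀ Qa
end

section
/- Let k ≥ 1, let Q be a finite state set, δ : Q × Σ → Q a deterministic transition function, c : Q → ℤᵏ a counter-update function, q₀ an initial state, Q_a ⊆ Q an accepting set, and let p_1, …, p_k be pairwise distinct primes. For a word w = w_1 … w_n let q_i = δ(q_{i−1}, w_i) be the run from q₀ and C(w) = ∑_{i=1}^{n} c(q_i) ∈ ℤᵏ the total counter update. Then there exists a generalized finite automaton G over Σ of dimension |Q| + 1 such that for every word w ∈ Σ*: f_G(w) = (∏_{l=1}^{k} (p_l)^{C(w)[l]}) − 1 if the final state q_n of the run belongs to Q_a, and f_G(w) = −1 if q_n ∉ Q_a. -/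
open Matrix

/-! The states of the automaton index the coordinates of a vector. Reading a letter moves the
single nonzero entry from the current state to the next one and multiplies it by the weight
`∏ l, p l ^ c q l` of the state entered, so after reading `w` the vector is
`∏ l, p l ^ C(w) l` times the indicator of the final state. One extra coordinate, fixed at `1`
and weighted `-1` by the final vector, supplies the `- 1`. -/

theorem Matrix.list_prod_reverse_map_mulVec_of_step {α S n R : Type*} [Fintype n] [DecidableEq n]
    [Semiring R] (M : α → Matrix n n R) (step : S → α → S) (e : S → n → R)
    (h : ∀ s a, M a *ᵥ e s = e (step s a)) (w : List α) (s : S) :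
    (w.reverse.map M).prod *ᵥ e s = e (w.foldl step s) := by
  induction w generalizing s with
  | nil => simp
  | cons a w ih =>
    rw [List.reverse_cons, List.map_append, List.prod_append, List.map_singleton,
      List.prod_singleton, ← mulVec_mulVec, h, ih, List.foldl_cons]

theorem Matrix.dotProduct_list_prod_reindex_mulVec {α m n R : Type*} [Fintype m] [Fintype n]
    [DecidableEq m] [DecidableEq n] [CommSemiring R]
    (e : m ≃ n) (M : α → Matrix m m R) (f v : m → R) (w : List α) :
    f ∘ e.symm ⬝ᵥ (w.reverse.map fun a => reindex e e (M a)).prod *ᵥ v ∘ e.symm =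
      f ⬝ᵥ (w.reverse.map M).prod *ᵥ v := by
  have hprod : (w.reverse.map fun a => reindex e e (M a)).prod =
      reindex e e (w.reverse.map M).prod := by
    simpa [Function.comp_def] using (map_list_prod (reindexAlgEquiv R R e) (w.reverse.map M)).symm
  rw [hprod, reindex_apply, submatrix_mulVec_equiv, comp_equiv_symm_dotProduct]
  simp [Function.comp_def]

def Matrix.extendOne {n R : Type*} [Zero R] [One R] (M : Matrix n n R) :
    Matrix (Option n) (Option n) R :=
  of fun i j => match i, j with
    | none, none => 1
    | some i, some j => M i j
    | _, _ => 0

theorem Matrix.extendOne_mulVec_elim {n R : Type*} [Fintype n] [NonAssocSemiring R]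
    (M : Matrix n n R) (y : R) (v : n → R) :
    M.extendOne *ᵥ (fun i => i.elim y v) = fun i => i.elim y (M *ᵥ v) := by
  funext i
  cases i <;> simp [extendOne, mulVec, dotProduct, Fintype.sum_option]

theorem Finset.prod_zpow_list_sum {ι β K : Type*} [Fintype ι] [CommGroupWithZero K]
    (p : ι → K) (hp : ∀ i, p i ≠ 0) (c : β → ι → ℤ) (L : List β) :
    ∏ i, p i ^ (L.map fun r => c r i).sum = (L.map fun r => ∏ i, p i ^ c r i).prod := by
  induction L with
  | nil => simp
  | cons r L ih => simp [zpow_add₀ (hp _), Finset.prod_mul_distrib, ih]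

section WeightedRun

variable {Q α R : Type*} (δ : Q → α → Q)

def weightedStep [Mul R] (μ : Q → R) (s : Q × R) (a : α) : Q × R :=
  (δ s.1 a, μ (δ s.1 a) * s.2)

theorem foldl_weightedStep [CommMonoid R] (μ : Q → R) (w : List α) (q : Q) (x : R) :
    w.foldl (weightedStep δ μ) (q, x) =
      (w.foldl δ q, ((List.scanl δ q w).tail.map μ).prod * x) := by
  induction w generalizing q x with
  | nil => simp
  | cons a w ih =>
    have hscan : ((List.scanl δ (δ q a) w).map μ).prod =
        μ (δ q a) * ((List.scanl δ (δ q a) w).tail.map μ).prod := by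
      cases w <;> simp [List.scanl_cons]
    rw [List.foldl_cons, weightedStep, ih, List.foldl_cons, List.scanl_cons, List.tail_cons,
      hscan, mul_assoc, mul_left_comm]

def weightedTransition [Zero R] [DecidableEq Q] (μ : Q → R) (a : α) : Matrix Q Q R :=
  of fun q' q => if q' = δ q a then μ q' else 0

theorem weightedTransition_mulVec_single [Fintype Q] [DecidableEq Q] [NonAssocSemiring R]
    (μ : Q → R) (a : α) (q : Q) (x : R) :
    weightedTransition δ μ a *ᵥ Pi.single q x = Pi.single (δ q a) (μ (δ q a) * x) := by
  funext q'
  by_cases h : q' = δ q a <;> simp [weightedTransition, mulVec_single, h]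

end WeightedRun

theorem exists_gfa_counter_product_minus_one_general {Q : Type} [Fintype Q] {α : Type}
    {k : ℕ} (δ : Q → α → Q) (c : Q → Fin k → ℤ)
    (q₀ : Q) (Qa : Set Q) (p : Fin k → ℕ)
    (hp : ∀ l, Nat.Prime (p l)) :
    ∃ (A : α → Matrix (Fin (Fintype.card Q + 1)) (Fin (Fintype.card Q + 1)) ℝ)
      (v0 f : Fin (Fintype.card Q + 1) → ℝ),
      ∀ w : List α,
        (w.foldl δ q₀ ∈ Qa →
          f ⬝ᵥ ((w.reverse.map A).prod *ᵥ v0) =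
            (∏ l, (p l : ℝ) ^ (((List.scanl δ q₀ w).tail.map fun r => c r l).sum)) - 1) ∧
        (w.foldl δ q₀ ∉ Qa →
          f ⬝ᵥ ((w.reverse.map A).prod *ᵥ v0) = -1) := by
  classical
  let e := Fintype.equivFinOfCardEq (Fintype.card_option (α := Q))
  let μ : Q → ℝ := fun q => ∏ l, (p l : ℝ) ^ c q l
  let embed : Q × ℝ → Option Q → ℝ := fun s i => i.elim 1 (Pi.single s.1 s.2)
  let out : Option Q → ℝ := fun i => i.elim (-1) (Qa.indicator 1)
  refine ⟨fun a => reindex e e (weightedTransition δ μ a).extendOne, embed (q₀, 1) ∘ e.symm,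
    out ∘ e.symm, fun w => ?_⟩
  have hstep (s : Q × ℝ) (a : α) :
      (weightedTransition δ μ a).extendOne *ᵥ embed s = embed (weightedStep δ μ s a) := by
    simp only [embed, extendOne_mulVec_elim, weightedTransition_mulVec_single, weightedStep]
  have hout (q : Q) (x : ℝ) : out ⬝ᵥ embed (q, x) = Qa.indicator 1 q * x - 1 := by
    simp only [out, embed, dotProduct, Fintype.sum_option, Option.elim_none, Option.elim_some,
      mul_one, Pi.single_apply, mul_ite, mul_zero, Finset.sum_ite_eq', Finset.mem_univ,
      if_true]
    ring
  have hweight : ((List.scanl δ q₀ w).tail.map μ).prod =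
      ∏ l, (p l : ℝ) ^ (((List.scanl δ q₀ w).tail.map fun r => c r l).sum) :=
    (Finset.prod_zpow_list_sum _ (fun l => by exact_mod_cast (hp l).ne_zero) c _).symm
  rw [dotProduct_list_prod_reindex_mulVec, list_prod_reverse_map_mulVec_of_step _ _ _ hstep,
    foldl_weightedStep, mul_one, hout, hweight]
  exact ⟨fun h => by simp [h], fun h => by simp [h]⟩

/-- **A GFA of dimension `|Q| + 1` computing `∏ l, p_l^{C(w)_l} − 1` on accepted runs.**
Let `k ≥ 1`, let `Q` be a finite state set, `δ : Q × Σ → Q` a deterministic transition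
function, `c : Q → ℤᵏ` a counter-update function (applied upon entering a state),
`q₀` an initial state, `Q_a ⊆ Q` an accepting set, and `p 1, …, p k` pairwise distinct
primes.  For a word `w = w₁ … w_n` let `q_i = δ q_{i-1} w_i` be the run from `q₀` and
`C(w) = ∑ i, c (q_i) ∈ ℤᵏ`.  Then there is a generalized finite automaton `G` over `Σ`
of dimension `|Q| + 1` (accepting value `f_G(w) = f · A_{w_m} ⋯ A_{w_1} · v0`) such
that for every word `w`: `f_G(w) = (∏ l, (p l) ^ (C(w) l)) - 1` if the final state
`q_n` of the run belongs to `Q_a`, and `f_G(w) = -1` if `q_n ∉ Q_a`. -/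
theorem exists_gfa_counter_product_minus_one {Q : Type} [Fintype Q] {α : Type}
    {k : ℕ} (hk : 1 ≤ k) (δ : Q → α → Q) (c : Q → Fin k → ℤ)
    (q₀ : Q) (Qa : Set Q) (p : Fin k → ℕ)
    (hp : ∀ l, Nat.Prime (p l)) (hdist : Function.Injective p) :
    ∃ (A : α → Matrix (Fin (Fintype.card Q + 1)) (Fin (Fintype.card Q + 1)) ℝ)
      (v0 f : Fin (Fintype.card Q + 1) → ℝ),
      ∀ w : List α,
        (w.foldl δ q₀ ∈ Qa →
          f ⬝ᵥ ((w.reverse.map A).prod *ᵥ v0) =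
            (∏ l, (p l : ℝ) ^ (((List.scanl δ q₀ w).tail.map fun r => c r l).sum)) - 1) ∧
        (w.foldl δ q₀ ∉ Qa →
          f ⬝ᵥ ((w.reverse.map A).prod *ᵥ v0) = -1) :=
  exists_gfa_counter_product_minus_one_general δ c q₀ Qa p hp
end
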